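/- Let E be a vector lattice over ℝ, let V be a real vector space, let n and r be positive integers with r ≥ 2, let T : E^n → V be a symmetric n-linear map, let P : E → V be defined by P(f) = T(f,...,f), and let S : E^r → V be the power sum polynomial S(u_1,...,u_r) = ∑_{k=1}^r P(u_k). If the restriction of S to (E⁺)^r is total orderization invariant, then P is positively orthogonally additive: P(f + g) = P(f) + P(g) for all f, g ∈ E⁺ with f ⊓ g = 0. -/
import Mathlib


open Finset

/-- `Mk x k` is `M_{k+1}(x_1,...,x_n)` (`k : Fin n` represents the 1-indexed index `k+1`):
the supremum over all subsets `I` of `{1,...,n}` of cardinality `n + 1 - (k+1) = n - k` of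
the infima `⋀_{i ∈ I} x i`. -/
def Mk {L : Type*} [Lattice L] {n : ℕ} (x : Fin n → L) (k : Fin n) : L :=
  ((univ : Finset (Fin n)).powersetCard (n - k.val)).attach.sup'
    (attach_nonempty_iff.mpr (powersetCard_nonempty.mpr (by simp)))
    fun I => I.1.inf' (card_pos.mp (by
      have h := (mem_powersetCard.mp I.2).2
      have hk := k.isLt
      omega)) x

/-- Let `T : E^n → V` be a symmetric `n`-linear map on a vector lattice `E`,
`P(f) = T(f,...,f)` its generated `n`-homogeneous polynomial, and
`S(u_1,...,u_r) = ∑_{k=1}^r P(u_k)` the corresponding power sum polynomial (`r ≥ 2`).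
If the restriction of `S` to `(E⁺)^r` is total orderization invariant, then `P` is
positively orthogonally additive. -/
theorem statement18 {E V : Type*} [Lattice E] [AddCommGroup E] [Module ℝ E]
    [CovariantClass E E (· + ·) (· ≤ ·)] [PosSMulMono ℝ E]
    [AddCommGroup V] [Module ℝ V] {n r : ℕ} (hn : 0 < n) (hr : 2 ≤ r)
    (T : MultilinearMap ℝ (fun _ : Fin n => E) V)
    (hsym : ∀ (σ : Equiv.Perm (Fin n)) (f : Fin n → E), T (fun i => f (σ i)) = T f)
    (P : E → V) (hP : ∀ f : E, P f = T (fun _ => f))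
    (S : (Fin r → E) → V) (hS : ∀ u : Fin r → E, S u = ∑ k, P (u k))
    (hto : ∀ x : Fin r → E, (∀ i, 0 ≤ x i) → S x = S (fun k => Mk x k))
    (f g : E) (hf : 0 ≤ f) (hg : 0 ≤ g) (hfg : f ⊓ g = 0) :
    P (f + g) = P f + P g := by
  classical
  haveI : Nonempty (Fin n) := ⟨⟨0, hn⟩⟩
  have hP0 : P 0 = 0 := by
    rw [hP]
    exact T.map_zero
  set i0 : Fin r := ⟨0, by omega⟩ with hi0def
  set i1 : Fin r := ⟨1, by omega⟩ with hi1def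
  set il : Fin r := ⟨r - 1, by omega⟩ with hildef
  have h01 : i0 ≠ i1 := by
    simp [hi0def, hi1def, Fin.ext_iff]
  set x : Fin r → E := fun i => if i = i0 then f else if i = i1 then g else 0 with hxdef
  have hx0 : x i0 = f := by simp [hxdef]
  have hx1 : x i1 = g := by simp [hxdef, h01.symm]
  have hxo : ∀ i, i ≠ i0 → i ≠ i1 → x i = 0 := by
    intro i h0 h1; simp [hxdef, h0, h1]
  have hxpos : ∀ i, 0 ≤ x i := by
    intro i
    simp only [hxdef]
    split_ifs with h0 h1
    · exact hf
    · exact hg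
    · exact le_refl 0
  have hsupadd : f ⊔ g = f + g := by
    have h := inf_add_sup f g
    rw [hfg, zero_add] at h
    exact h
  -- sum of P (x k)
  have claim1 : ∑ k, P (x k) = P f + P g := by
    have hpt : ∀ k : Fin r, P (x k) =
        (if k = i0 then P f else 0) + (if k = i1 then P g else 0) := by
      intro k
      by_cases h0 : k = i0
      · have h1 : k ≠ i1 := by rw [h0]; exact h01
        simp [h0, h1, hx0, h01]
      · by_cases h1 : k = i1
        · simp [h0, h1, hx1, h01.symm]
        · simp [h0, h1, hxo k h0 h1, hP0]
    rw [Finset.sum_congr rfl fun k _ => hpt k, Finset.sum_add_distrib,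
      Finset.sum_ite_eq' univ i0 (fun _ => P f),
      Finset.sum_ite_eq' univ i1 (fun _ => P g)]
    simp
  -- Mk x k = 0 for k ≠ il
  have claim2 : ∀ k : Fin r, k ≠ il → Mk x k = 0 := by
    intro k hk
    have hklt : k.val < r - 1 := by
      have := k.isLt
      have : k.val ≠ r - 1 := fun h => hk (Fin.ext h)
      omega
    apply le_antisymm
    · apply Finset.sup'_le
      intro I hI
      have hcard : I.1.card = r - k.val := (mem_powersetCard.mp I.2).2
      have h2 : 1 < I.1.card := by omega
      by_cases hbig : ∃ i ∈ I.1, 1 < i.val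
      · obtain ⟨i, hiI, hi⟩ := hbig
        have hxi : x i = 0 := by
          apply hxo
          · intro h; rw [h] at hi; simp [hi0def] at hi
          · intro h; rw [h] at hi; simp [hi1def] at hi
        exact le_trans (Finset.inf'_le _ hiI) (le_of_eq hxi)
      · push_neg at hbig
        obtain ⟨a, ha, b, hb, hab⟩ := Finset.one_lt_card.mp h2
        have hav := hbig a ha
        have hbv := hbig b hb
        have habv : a.val ≠ b.val := fun h => hab (Fin.ext h)
        have hmem : i0 ∈ I.1 ∧ i1 ∈ I.1 := by
          rcases Nat.lt_or_ge a.val 1 with h | h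
          · have ha0 : a = i0 := Fin.ext (by simp [hi0def]; omega)
            have hb1 : b = i1 := Fin.ext (by simp [hi1def]; omega)
            exact ⟨ha0 ▸ ha, hb1 ▸ hb⟩
          · have ha1 : a = i1 := Fin.ext (by simp [hi1def]; omega)
            have hb0 : b = i0 := Fin.ext (by simp [hi0def]; omega)
            exact ⟨hb0 ▸ hb, ha1 ▸ ha⟩
        calc I.1.inf' _ x ≤ x i0 ⊓ x i1 :=
              le_inf (Finset.inf'_le _ hmem.1) (Finset.inf'_le _ hmem.2)
          _ = 0 := by rw [hx0, hx1, hfg]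
    · have hne : ((univ : Finset (Fin r)).powersetCard (r - k.val)).attach.Nonempty :=
        attach_nonempty_iff.mpr (powersetCard_nonempty.mpr (by simp))
      obtain ⟨J, hJ⟩ := hne
      refine le_trans ?_ (Finset.le_sup' _ hJ)
      exact Finset.le_inf' _ _ fun i _ => hxpos i
  -- Mk x il = f + g
  have claim3 : Mk x il = f + g := by
    have hm : r - il.val = 1 := by simp [hildef]; omega
    rw [← hsupadd]
    apply le_antisymm
    · apply Finset.sup'_le
      intro I hI
      have hcard : I.1.card = 1 := by rw [(mem_powersetCard.mp I.2).2, hm]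
      obtain ⟨i, hi⟩ := Finset.card_eq_one.mp hcard
      have hiI : i ∈ I.1 := by rw [hi]; exact Finset.mem_singleton_self i
      refine le_trans (Finset.inf'_le _ hiI) ?_
      simp only [hxdef]
      split_ifs with h0 h1
      · exact le_sup_left
      · exact le_sup_right
      · exact le_trans hf le_sup_left
    · apply sup_le
      · have hmem : ({i0} : Finset (Fin r)) ∈ (univ : Finset (Fin r)).powersetCard (r - il.val) := by
          rw [mem_powersetCard]
          exact ⟨Finset.subset_univ _, by rw [Finset.card_singleton, hm]⟩
        have := Finset.le_sup' (f := fun I : {I // I ∈ (univ : Finset (Fin r)).powersetCard (r - il.val)} =>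
            I.1.inf' (card_pos.mp (by
              have h := (mem_powersetCard.mp I.2).2
              have hk := il.isLt
              omega)) x)
          (Finset.mem_attach _ (⟨{i0}, hmem⟩ : {I // I ∈ (univ : Finset (Fin r)).powersetCard (r - il.val)}))
        refine le_trans ?_ this
        simp [hx0]
      · have hmem : ({i1} : Finset (Fin r)) ∈ (univ : Finset (Fin r)).powersetCard (r - il.val) := by
          rw [mem_powersetCard]
          exact ⟨Finset.subset_univ _, by rw [Finset.card_singleton, hm]⟩
        have := Finset.le_sup' (f := fun I : {I // I ∈ (univ : Finset (Fin r)).powersetCard (r - il.val)} =>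
            I.1.inf' (card_pos.mp (by
              have h := (mem_powersetCard.mp I.2).2
              have hk := il.isLt
              omega)) x)
          (Finset.mem_attach _ (⟨{i1}, hmem⟩ : {I // I ∈ (univ : Finset (Fin r)).powersetCard (r - il.val)}))
        refine le_trans ?_ this
        simp [hx1]
  have claimM : ∑ k, P (Mk x k) = P (f + g) := by
    have hpt : ∀ k : Fin r, P (Mk x k) = if k = il then P (f + g) else 0 := by
      intro k
      by_cases h : k = il
      · simp [h, claim3]
      · simp [h, claim2 k h, hP0]
    rw [Finset.sum_congr rfl fun k _ => hpt k,
      Finset.sum_ite_eq' univ il (fun _ => P (f + g))]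
    simp
  have key := hto x hxpos
  rw [hS, hS, claim1, claimM] at key
  exact key.symm
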